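/- Let G ⊆ SL(4,ℂ) be the closed subgroup of block matrices [[A, B],[0, A]] with A ∈ SU(2) and B ∈ 𝔤𝔩(2,ℂ), acting on U = ℂ⁴ = ℂ² ⊕ ℂ² by the restriction of the defining representation of SL(4,ℂ). Let e₁ = (1,0) ∈ ℂ² and let V = {(v,w) ∈ ℂ² ⊕ ℂ² : v ∈ ℂe₁, w ∈ ℂe₁}. Then V is universal for G, but V is not universal for the Levi subgroup S = {[[A,0],[0,A]] : A ∈ SU(2)} of G: for instance, there is no A ∈ SU(2) with both Ae₁ ∈ ℂe₁ and Ae₂ ∈ ℂe₁. -/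

import Mathlib

open Matrix

/-- The subspace `V = ℂe₁ ⊕ ℂe₁` of `U = ℂ² ⊕ ℂ²`, i.e. vectors `(v, w)` with
`v, w ∈ ℂe₁`, described by the vanishing of the second coordinates. -/
def Vsub : Set (Fin 2 ⊕ Fin 2 → ℂ) := {u | u (Sum.inl 1) = 0 ∧ u (Sum.inr 1) = 0}

lemma exists_su2 (w : Fin 2 → ℂ) :
    ∃ A ∈ Matrix.specialUnitaryGroup (Fin 2) ℂ, A.mulVec w 1 = 0 := by
  by_cases h : w 0 = 0 ∧ w 1 = 0
  · refine ⟨1, one_mem _, ?_⟩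
    simp [Matrix.mulVec, dotProduct, Fin.sum_univ_two, h.1, h.2]
  · set a := w 0
    set b := w 1
    have hr : (0:ℝ) < Complex.normSq a + Complex.normSq b := by
      rcases not_and_or.mp h with h' | h'
      · exact add_pos_of_pos_of_nonneg (Complex.normSq_pos.mpr h') (Complex.normSq_nonneg _)
      · exact add_pos_of_nonneg_of_pos (Complex.normSq_nonneg _) (Complex.normSq_pos.mpr h')

    set r : ℝ := Real.sqrt (Complex.normSq a + Complex.normSq b) with hrdef
    have hrpos : 0 < r := Real.sqrt_pos.mpr hr
    have hrne : (r : ℂ) ≠ 0 := by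
      exact_mod_cast Complex.ofReal_ne_zero.mpr hrpos.ne'
    have hr2 : (r : ℂ) * (r : ℂ) = (starRingEnd ℂ) a * a + (starRingEnd ℂ) b * b := by
      have : (r:ℝ) * r = Complex.normSq a + Complex.normSq b := Real.mul_self_sqrt hr.le
      calc (r : ℂ) * r = ((r*r : ℝ) : ℂ) := by push_cast; ring
        _ = ((Complex.normSq a + Complex.normSq b : ℝ) : ℂ) := by rw [this]
        _ = _ := by push_cast [Complex.normSq_eq_conj_mul_self]; ring
    refine ⟨(r:ℂ)⁻¹ • !![(starRingEnd ℂ) a, (starRingEnd ℂ) b; -b, a], ?_, ?_⟩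
    · rw [Matrix.mem_specialUnitaryGroup_iff]
      constructor
      · rw [Matrix.mem_unitaryGroup_iff]
        ext i j
        fin_cases i <;> fin_cases j <;>
          simp [Matrix.mul_apply, Fin.sum_univ_two, Matrix.one_apply, mul_comm, mul_left_comm] <;>
          field_simp <;> linear_combination -hr2
      · rw [Matrix.det_fin_two]
        simp only [Matrix.smul_apply, Matrix.of_apply, Matrix.cons_val', Matrix.cons_val_zero,
          Matrix.cons_val_one, Matrix.empty_val', Matrix.cons_val_fin_one, smul_eq_mul]
        field_simp
        linear_combination -hr2
    · simp [Matrix.mulVec, dotProduct, Fin.sum_univ_two]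
      ring

lemma no_su2 (A : Matrix (Fin 2) (Fin 2) ℂ)
    (hA : A ∈ Matrix.specialUnitaryGroup (Fin 2) ℂ)
    (h0 : A 1 0 = 0) (h1 : A 1 1 = 0) : False := by
  have hdet : A.det = 1 := (Matrix.mem_specialUnitaryGroup_iff.mp hA).2
  rw [Matrix.det_fin_two, h0, h1] at hdet
  simp at hdet

/-- Let `G ⊆ SL(4,ℂ)` be the group of block matrices `[[A, B], [0, A]]`
with `A ∈ SU(2)`, `B ∈ 𝔤𝔩(2,ℂ)`, acting on `U = ℂ² ⊕ ℂ²`, and let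
`V = {(v,w) : v ∈ ℂe₁, w ∈ ℂe₁}`.  Then `V` is universal for `G`, but `V` is not universal
for the Levi subgroup `S = {[[A,0],[0,A]] : A ∈ SU(2)}`; indeed there is no `A ∈ SU(2)` with
both `A e₁ ∈ ℂe₁` and `A e₂ ∈ ℂe₁`. -/
theorem levi_universality_fails_noncompact :
    (∀ u : Fin 2 ⊕ Fin 2 → ℂ,
      ∃ A ∈ Matrix.specialUnitaryGroup (Fin 2) ℂ, ∃ B : Matrix (Fin 2) (Fin 2) ℂ,
        (Matrix.fromBlocks A B 0 A).mulVec u ∈ Vsub) ∧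
    ¬ (∀ u : Fin 2 ⊕ Fin 2 → ℂ,
      ∃ A ∈ Matrix.specialUnitaryGroup (Fin 2) ℂ,
        (Matrix.fromBlocks A 0 0 A).mulVec u ∈ Vsub) ∧
    ¬ (∃ A ∈ Matrix.specialUnitaryGroup (Fin 2) ℂ,
        (A.mulVec ![1, 0]) 1 = 0 ∧ (A.mulVec ![0, 1]) 1 = 0) := by
  refine ⟨?_, ?_, ?_⟩
  · intro u
    by_cases hw : u (Sum.inr 0) = 0 ∧ u (Sum.inr 1) = 0
    · obtain ⟨A, hA, hAv⟩ := exists_su2 (fun i => u (Sum.inl i))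
      refine ⟨A, hA, 0, ?_, ?_⟩ <;>
        simp_all [Matrix.mulVec, dotProduct, Fintype.sum_sum_type,
          Fin.sum_univ_two, Matrix.fromBlocks, Vsub]
    · obtain ⟨A, hA, hAw⟩ := exists_su2 (fun i => u (Sum.inr i))
      simp only [Matrix.mulVec, dotProduct, Fin.sum_univ_two] at hAw
      set c : ℂ := A 1 0 * u (Sum.inl 0) + A 1 1 * u (Sum.inl 1) with hc
      rcases not_and_or.mp hw with h0 | h1
      · refine ⟨A, hA, !![0,0; -c * (u (Sum.inr 0))⁻¹, 0], ?_, ?_⟩ <;>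
          simp [Matrix.mulVec, dotProduct, Fintype.sum_sum_type,
            Fin.sum_univ_two, Matrix.fromBlocks, Vsub, hAw]
        rw [mul_assoc, inv_mul_cancel₀ h0, mul_one, hc]
        ring
      · refine ⟨A, hA, !![0,0; 0, -c * (u (Sum.inr 1))⁻¹], ?_, ?_⟩ <;>
          simp [Matrix.mulVec, dotProduct, Fintype.sum_sum_type,
            Fin.sum_univ_two, Matrix.fromBlocks, Vsub, hAw]
        rw [mul_assoc, inv_mul_cancel₀ h1, mul_one, hc]
        ring
  · intro h
    obtain ⟨A, hA, hmem⟩ := h (Sum.elim ![1, 0] ![0, 1])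
    obtain ⟨h1, h2⟩ := hmem
    apply no_su2 A hA
    · simpa [Matrix.mulVec, dotProduct, Fintype.sum_sum_type,
        Fin.sum_univ_two, Matrix.fromBlocks] using h1
    · simpa [Matrix.mulVec, dotProduct, Fintype.sum_sum_type,
        Fin.sum_univ_two, Matrix.fromBlocks] using h2
  · rintro ⟨A, hA, h1, h2⟩
    simp [Matrix.mulVec, dotProduct, Fin.sum_univ_two] at h1 h2
    exact no_su2 A hA h1 h2
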